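/- arXiv:2205.04803 — 2 statements merged into one kernel-verified Lean document; each statement's English description precedes it below -/
import Mathlib

section
/- The matrix function X(t) satisfies the variational equation X′(t) = JD²H(x^h(t)) X(t) for all t ∈ I, and det X(t) = 1 for all t ∈ I; in particular, X(t) is a fundamental matrix of the linearization ξ̇ = JD²H(x^h(t))ξ along x^h. -/
open Matrix

/-- First partial derivative `∂H/∂x₁`. -/
noncomputable def D1 (H : ℝ × ℝ → ℝ) (x : ℝ × ℝ) : ℝ := fderiv ℝ H x (1, 0)

/-- Second partial derivative `∂H/∂x₂`. -/
noncomputable def D2 (H : ℝ × ℝ → ℝ) (x : ℝ × ℝ) : ℝ := fderiv ℝ H x (0, 1)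

/-- The matrix `J D²H(x^h(t))` of the variational equation, where `J = [[0,1],[−1,0]]`. -/
noncomputable def varMatrix (H : ℝ × ℝ → ℝ) (xh : ℝ → ℝ × ℝ) (t : ℝ) :
    Matrix (Fin 2) (Fin 2) ℝ :=
  !![D1 (D2 H) (xh t), D2 (D2 H) (xh t);
     -(D1 (D1 H) (xh t)), -(D2 (D1 H) (xh t))]

/-- The matrix `X(t)` with first column `JDH(x^h(t)) = (∂₂H, −∂₁H)ᵀ` and second column
`χ(t)·JDH(x^h(t)) + (0, 1/∂₂H(x^h(t)))ᵀ`. -/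
noncomputable def fundMatrix (H : ℝ × ℝ → ℝ) (xh : ℝ → ℝ × ℝ) (χ : ℝ → ℝ) (t : ℝ) :
    Matrix (Fin 2) (Fin 2) ℝ :=
  !![D2 H (xh t), χ t * D2 H (xh t);
     -(D1 H (xh t)), -(χ t * D1 H (xh t)) + (D2 H (xh t))⁻¹]

/-!
The first column of `X` is the velocity `ẋ^h = JDH(x^h)`, which solves the variational
equation because the flow commutes with time translation.  Differentiating the entries with
the chain rule along `x^h`, the second column does too: the derivative `χ'` is chosen exactly
so that the `∂²₂₂H` terms coming from `(1/∂₂H)'` cancel, and the remaining terms match by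
symmetry of the Hessian.  The determinant is `∂₂H · (1/∂₂H) = 1`, as the `χ`-terms of the
second column are a multiple of the first column.
-/

lemma fderiv_clm_apply_const {𝕜 E F G : Type*} [NontriviallyNormedField 𝕜]
    [NormedAddCommGroup E] [NormedSpace 𝕜 E] [NormedAddCommGroup F] [NormedSpace 𝕜 F]
    [NormedAddCommGroup G] [NormedSpace 𝕜 G] {c : E → F →L[𝕜] G} {x : E}
    (hc : DifferentiableAt 𝕜 c x) (v : F) :
    fderiv 𝕜 (fun y => c y v) x = (fderiv 𝕜 c x).flip v := by
  rw [fderiv_clm_apply hc (differentiableAt_const v)]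
  simp

section Partials

variable {H : ℝ × ℝ → ℝ}

lemma differentiable_D1 (hH : ContDiff ℝ 2 H) : Differentiable ℝ (D1 H) :=
  ((hH.fderiv_right (m := 1) le_rfl).clm_apply contDiff_const).differentiable one_ne_zero

lemma differentiable_D2 (hH : ContDiff ℝ 2 H) : Differentiable ℝ (D2 H) :=
  ((hH.fderiv_right (m := 1) le_rfl).clm_apply contDiff_const).differentiable one_ne_zero

lemma D1_D2_comm (hH : ContDiff ℝ 2 H) (x : ℝ × ℝ) : D1 (D2 H) x = D2 (D1 H) x := by
  have hd : DifferentiableAt ℝ (fderiv ℝ H) x :=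
    (hH.fderiv_right (m := 1) le_rfl).differentiable one_ne_zero x
  have hsymm := hH.contDiffAt.isSymmSndFDerivAt (x := x)
    (by simp [minSmoothness_of_isRCLikeNormedField])
  calc D1 (D2 H) x = fderiv ℝ (fderiv ℝ H) x (1, 0) (0, 1) :=
        DFunLike.congr_fun (fderiv_clm_apply_const hd (0, 1)) (1, 0)
    _ = fderiv ℝ (fderiv ℝ H) x (0, 1) (1, 0) := hsymm _ _
    _ = D2 (D1 H) x := (DFunLike.congr_fun (fderiv_clm_apply_const hd (1, 0)) (0, 1)).symm

end Partials

lemma DifferentiableAt.hasDerivAt_comp_curve {g : ℝ × ℝ → ℝ} {γ : ℝ → ℝ × ℝ} {t a b : ℝ}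
    (hg : DifferentiableAt ℝ g (γ t)) (hγ : HasDerivAt γ (a, b) t) :
    HasDerivAt (fun s => g (γ s)) (a * D1 g (γ t) + b * D2 g (γ t)) t := by
  refine (hg.hasFDerivAt.comp_hasDerivAt t hγ).congr_deriv ?_
  have hv : ((a, b) : ℝ × ℝ) = a • ((1 : ℝ), (0 : ℝ)) + b • ((0 : ℝ), (1 : ℝ)) := by simp
  rw [hv, map_add, map_smul, map_smul]
  rfl

lemma det_fundMatrix {H : ℝ × ℝ → ℝ} {xh : ℝ → ℝ × ℝ} {t : ℝ} (χ : ℝ → ℝ)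
    (hne : D2 H (xh t) ≠ 0) : (fundMatrix H xh χ t).det = 1 := by
  rw [fundMatrix, det_fin_two_of]
  field_simp
  ring

theorem fundMatrix_solves_variational_eq_general
    (H : ℝ × ℝ → ℝ) (hH : ContDiff ℝ 2 H)
    (I : Set ℝ)
    (xh : ℝ → ℝ × ℝ)
    (hxh : ∀ t ∈ I, HasDerivAt xh (D2 H (xh t), -(D1 H (xh t))) t)
    (hne : ∀ t ∈ I, D2 H (xh t) ≠ 0)
    (χ : ℝ → ℝ)
    (hχ : ∀ t ∈ I, HasDerivAt χ (D2 (D2 H) (xh t) / (D2 H (xh t)) ^ 2) t) :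
    ∀ t ∈ I,
      (∀ i j : Fin 2,
        HasDerivAt (fun s => fundMatrix H xh χ s i j)
          ((varMatrix H xh t * fundMatrix H xh χ t) i j) t) ∧
      (fundMatrix H xh χ t).det = 1 := by
  intro t ht
  have hp0 := hne t ht
  have hp := (differentiable_D2 hH _).hasDerivAt_comp_curve (hxh t ht)
  have hq := (differentiable_D1 hH _).hasDerivAt_comp_curve (hxh t ht)
  have hsymm := D1_D2_comm hH (xh t)
  refine ⟨fun i j => ?_, det_fundMatrix χ hp0⟩
  simp only [fundMatrix, varMatrix, mul_fin_two]
  fin_cases i <;> fin_cases j <;>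
    simp only [Fin.zero_eta, Fin.mk_one, Fin.isValue, of_apply, cons_val', cons_val_zero,
      cons_val_one, cons_val_fin_one]
  · exact hp.congr_deriv (by ring)
  · exact ((hχ t ht).mul hp).congr_deriv (by field_simp; ring)
  · exact hq.neg.congr_deriv (by ring)
  · refine (((hχ t ht).mul hq).neg.add (hp.inv hp0)).congr_deriv ?_
    rw [hsymm]
    field_simp
    ring

/-- `X(t)` solves the variational equation `X′ = J D²H(x^h(t)) X` on `I` and has
determinant `1` there; in particular it is a fundamental matrix of the linearization
`ξ̇ = J D²H(x^h(t)) ξ` along `x^h`. -/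
theorem fundMatrix_solves_variational_eq
    (H : ℝ × ℝ → ℝ) (hH : ContDiff ℝ 2 H)
    (I : Set ℝ) (hIopen : IsOpen I) (hIconn : I.OrdConnected)
    (xh : ℝ → ℝ × ℝ)
    (hxh : ∀ t ∈ I, HasDerivAt xh (D2 H (xh t), -(D1 H (xh t))) t)
    (hne : ∀ t ∈ I, D2 H (xh t) ≠ 0)
    (χ : ℝ → ℝ)
    (hχ : ∀ t ∈ I, HasDerivAt χ (D2 (D2 H) (xh t) / (D2 H (xh t)) ^ 2) t) :
    ∀ t ∈ I,
      (∀ i j : Fin 2,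
        HasDerivAt (fun s => fundMatrix H xh χ s i j)
          ((varMatrix H xh t * fundMatrix H xh χ t) i j) t) ∧
      (fundMatrix H xh χ t).det = 1 :=
  fundMatrix_solves_variational_eq_general H hH I xh hxh hne χ hχ
end

section
/- For every a > 0, ∫_{−∞}^{∞} sech²(t) cos(at) dt = πa / sinh(πa/2). -/
/-!
Substituting `u = σ(2t) = (1 + e^{-2t})⁻¹`, whose derivative is `sech² t / 2`, turns the integral
into `2 ∫₀¹ cos ((a/2) log (u / (1 - u))) du`, which is twice the real part of the Beta integral
`B(1 + z, 1 - z)` with `z = ia/2`. As `Γ 2 = 1`, this equals `Γ(1 + z) Γ(1 - z) = πz / sin (πz)`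
by the reflection formula, i.e. `(πa/2) / sinh (πa/2)`.
-/

open Real MeasureTheory Set

namespace Real

lemma sigmoid_div_one_sub_sigmoid (x : ℝ) : sigmoid x / (1 - sigmoid x) = exp x := by
  rw [← sigmoid_neg, ← sigmoid_mul_rexp_neg, div_mul_cancel_left₀ (sigmoid_pos x).ne', exp_neg,
    inv_inv]

lemma log_sigmoid_div_one_sub_sigmoid (x : ℝ) : log (sigmoid x / (1 - sigmoid x)) = x := by
  rw [sigmoid_div_one_sub_sigmoid, log_exp]

lemma cosh_inv_sq_eq_sigmoid (t : ℝ) :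
    (cosh t)⁻¹ ^ 2 = 4 * (sigmoid (2 * t) * (1 - sigmoid (2 * t))) := by
  have hprod : exp t * exp (-t) = 1 := by rw [← exp_add, add_neg_cancel, exp_zero]
  have hsq (s : ℝ) : exp (2 * s) = exp s ^ 2 := by rw [← exp_nat_mul]; norm_num
  rw [← sigmoid_neg, sigmoid_def, sigmoid_def, cosh_eq, neg_neg, ← mul_neg, hsq, hsq]
  field_simp
  linear_combination (4 * (exp t * exp (-t)) - 4) * hprod

lemma integral_cosh_inv_sq_smul {E : Type*} [NormedAddCommGroup E] [NormedSpace ℝ E]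
    (g : ℝ → E) :
    ∫ t, (cosh t)⁻¹ ^ 2 • g t = (2 : ℝ) • ∫ u in Ioo 0 1, g (log (u / (1 - u)) / 2) := by
  have hderiv : ∀ t ∈ univ,
      HasDerivWithinAt (fun t ↦ sigmoid (2 * t)) ((cosh t)⁻¹ ^ 2 / 2) univ t := by
    intro t _
    have := (hasDerivAt_sigmoid (2 * t)).comp t ((hasDerivAt_id t).const_mul 2)
    rw [cosh_inv_sq_eq_sigmoid]
    exact (this.congr_deriv (by ring)).hasDerivWithinAt
  have himage : (fun t ↦ sigmoid (2 * t)) '' univ = Ioo 0 1 := by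
    rw [image_univ, ← range_sigmoid]
    exact (mul_left_surjective₀ two_ne_zero).range_comp sigmoid
  have hinj : InjOn (fun t ↦ sigmoid (2 * t)) univ :=
    (sigmoid_injective.comp (mul_right_injective₀ two_ne_zero)).injOn
  rw [← himage, integral_image_eq_integral_abs_deriv_smul MeasurableSet.univ hderiv hinj,
    setIntegral_univ, ← integral_smul]
  congr with t
  rw [log_sigmoid_div_one_sub_sigmoid, abs_of_nonneg (by positivity), smul_smul,
    mul_div_cancel₀ _ two_ne_zero, mul_div_cancel_left₀ _ two_ne_zero]

end Real

namespace Complex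

lemma betaIntegral_eq_setIntegral_Ioo (u v : ℂ) :
    betaIntegral u v = ∫ x in Ioo (0 : ℝ) 1, (x : ℂ) ^ (u - 1) * (1 - (x : ℂ)) ^ (v - 1) := by
  rw [betaIntegral, intervalIntegral.integral_of_le zero_le_one, integral_Ioc_eq_integral_Ioo]

lemma betaIntegral_one_add_one_sub {z : ℂ} (hz : z ≠ 0) (h₀ : -1 < z.re) (h₁ : z.re < 1) :
    betaIntegral (1 + z) (1 - z) = π * z / sin (π * z) := by
  have hB := Gamma_mul_Gamma_eq_betaIntegral (s := 1 + z) (t := 1 - z)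
    (by rw [add_re, one_re]; linarith) (by rw [sub_re, one_re]; linarith)
  rw [add_add_sub_cancel, one_add_one_eq_two, Gamma_ofNat_eq_factorial 1, Nat.factorial_one,
    Nat.cast_one, one_mul] at hB
  rw [← hB, add_comm, Gamma_add_one z hz, mul_assoc, Gamma_mul_Gamma_one_sub, mul_div_assoc',
    mul_comm]

lemma betaIntegral_one_add_mul_I_one_sub {y : ℝ} (hy : y ≠ 0) :
    betaIntegral (1 + y * I) (1 - y * I) = (π * y / Real.sinh (π * y) : ℝ) := by
  rw [betaIntegral_one_add_one_sub (by simpa using hy) (by simp) (by simp), ← mul_assoc,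
    sin_mul_I, ← ofReal_mul, ← ofReal_sinh, mul_div_mul_right _ _ I_ne_zero, ofReal_div]

lemma cpow_mul_I_mul_one_sub_cpow_neg {x : ℝ} (hx : x ∈ Ioo 0 1) (y : ℝ) :
    (x : ℂ) ^ (y * I) * (1 - (x : ℂ)) ^ (-(y * I))
      = exp ((y * Real.log (x / (1 - x)) : ℝ) * I) := by
  obtain ⟨hx₀, hx₁⟩ := hx
  have h1x : (0 : ℝ) < 1 - x := sub_pos.mpr hx₁
  rw [← ofReal_one, ← ofReal_sub, cpow_def_of_ne_zero (by exact_mod_cast hx₀.ne'),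
    cpow_def_of_ne_zero (by exact_mod_cast h1x.ne'), ← exp_add, ← ofReal_log hx₀.le,
    ← ofReal_log h1x.le, Real.log_div hx₀.ne' h1x.ne']
  push_cast
  ring_nf

lemma integral_cos_mul_log_div_one_sub (y : ℝ) :
    ∫ x in Ioo (0 : ℝ) 1, Real.cos (y * Real.log (x / (1 - x)))
      = (betaIntegral (1 + y * I) (1 - y * I)).re := by
  have hint : IntegrableOn (fun x : ℝ ↦ (x : ℂ) ^ (y * I) * (1 - (x : ℂ)) ^ (-(y * I)))
      (Ioo 0 1) := by
    have := betaIntegral_convergent (u := 1 + y * I) (v := 1 - y * I) (by simp) (by simp)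
    rw [intervalIntegrable_iff_integrableOn_Ioo_of_le zero_le_one] at this
    simpa [sub_eq_add_neg] using this
  rw [betaIntegral_eq_setIntegral_Ioo, add_sub_cancel_left, sub_sub_cancel_left,
    ← reCLM_apply, ← reCLM.integral_comp_comm hint]
  refine setIntegral_congr_fun measurableSet_Ioo fun x hx ↦ ?_
  rw [reCLM_apply, cpow_mul_I_mul_one_sub_cpow_neg hx, exp_ofReal_mul_I_re]

end Complex

/-- For every `a > 0`, `∫_{−∞}^{∞} sech² t · cos (a t) dt = π a / sinh (π a / 2)`,
where `sech t = 1 / cosh t`. -/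
theorem integral_sech_sq_cos (a : ℝ) (ha : 0 < a) :
    ∫ t : ℝ, ((Real.cosh t)⁻¹) ^ 2 * Real.cos (a * t)
      = Real.pi * a / Real.sinh (Real.pi * a / 2) := by
  have hsubst := integral_cosh_inv_sq_smul fun t ↦ Real.cos (a * t)
  simp only [smul_eq_mul, mul_div_assoc', ← div_mul_eq_mul_div] at hsubst
  rw [hsubst, Complex.integral_cos_mul_log_div_one_sub,
    Complex.betaIntegral_one_add_mul_I_one_sub (by positivity), Complex.ofReal_re,
    ← mul_div_assoc π a 2]
  ring
end
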